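/- arXiv:1212.2549 — 6 statements merged into one kernel-verified Lean document; each statement's English description precedes it below -/
import Mathlib

section
/- For every natural number c ≥ 1, there exists a unique natural number j such that the Fermat number F_j = 2^(2^j) + 1 divides 2^c + 1. -/
/-- The `j`-th Fermat number `F j = 2^(2^j) + 1`. -/
def F (j : ℕ) : ℕ := 2 ^ (2 ^ j) + 1

lemma F_two_lt (k : ℕ) : 2 < F k := by
  have : 2 ≤ 2 ^ 2 ^ k := Nat.one_lt_two_pow (by positivity)
  simp only [F]; omega

lemma two_pow_eq_neg_one (k : ℕ) : (2 : ZMod (F k)) ^ (2 ^ k) = -1 := by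
  have h : ((2 ^ (2 ^ k) + 1 : ℕ) : ZMod (F k)) = 0 := by
    rw [← F]; exact ZMod.natCast_self _
  push_cast at h
  linear_combination h

lemma key (k c : ℕ) (h : F k ∣ 2 ^ c + 1) : 2 ^ k ∣ c ∧ ¬ 2 ^ (k + 1) ∣ c := by
  haveI : Fact (2 < F k) := ⟨F_two_lt k⟩
  haveI : NeZero (F k) := ⟨by have := F_two_lt k; omega⟩
  have hne : (-1 : ZMod (F k)) ≠ 1 := ZMod.neg_one_ne_one
  have hc2 : (2 : ZMod (F k)) ^ c = -1 := by
    have : ((2 ^ c + 1 : ℕ) : ZMod (F k)) = 0 := (ZMod.natCast_eq_zero_iff _ _).2 h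
    push_cast at this
    linear_combination this
  have hpk := two_pow_eq_neg_one k
  have hpk1 : (2 : ZMod (F k)) ^ (2 ^ (k + 1)) = 1 := by
    rw [pow_succ, pow_mul, hpk]; ring
  have hordk1 : orderOf (2 : ZMod (F k)) ∣ 2 ^ (k + 1) :=
    orderOf_dvd_of_pow_eq_one hpk1
  obtain ⟨m, hm, hmeq⟩ := (Nat.dvd_prime_pow Nat.prime_two).1 hordk1
  have hmk : m = k + 1 := by
    by_contra hmk
    have hmle : m ≤ k := by omega
    have : orderOf (2 : ZMod (F k)) ∣ 2 ^ k := hmeq ▸ pow_dvd_pow 2 hmle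
    have h1 : (2 : ZMod (F k)) ^ (2 ^ k) = 1 := orderOf_dvd_iff_pow_eq_one.1 this
    exact hne (h1 ▸ hpk.symm)
  have hord : orderOf (2 : ZMod (F k)) = 2 ^ (k + 1) := by rw [hmeq, hmk]
  constructor
  · have h2c : (2 : ZMod (F k)) ^ (2 * c) = 1 := by
      rw [mul_comm, pow_mul, hc2]; ring
    have : 2 ^ (k + 1) ∣ 2 * c := hord ▸ orderOf_dvd_of_pow_eq_one h2c
    rw [pow_succ, mul_comm (2 ^ k) 2] at this
    exact (Nat.mul_dvd_mul_iff_left (by norm_num)).1 this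
  · intro hdvd
    obtain ⟨t, ht⟩ := hdvd
    have : (2 : ZMod (F k)) ^ c = 1 := by
      rw [ht, pow_mul, hpk1, one_pow]
    exact hne (this ▸ hc2.symm)

theorem unique_fermat_divisor (c : ℕ) (hc : 1 ≤ c) :
    ∃! j : ℕ, F j ∣ 2 ^ c + 1 := by
  have hc0 : c ≠ 0 := by omega
  set j := c.factorization 2 with hj
  refine ⟨j, ?_, ?_⟩
  · -- existence
    have hceq : 2 ^ j * (c / 2 ^ j) = c := Nat.ordProj_mul_ordCompl_eq_self c 2
    have hodd : Odd (c / 2 ^ j) := by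
      have := Nat.not_dvd_ordCompl Nat.prime_two hc0
      exact Nat.odd_iff.2 (Nat.two_dvd_ne_zero.mp this)
    calc F j = 2 ^ (2 ^ j) + 1 := rfl
      _ ∣ (2 ^ (2 ^ j)) ^ (c / 2 ^ j) + 1 ^ (c / 2 ^ j) :=
          Odd.nat_add_dvd_pow_add_pow _ _ hodd
      _ = 2 ^ c + 1 := by rw [← pow_mul, hceq, one_pow]
  · -- uniqueness
    intro y hy
    obtain ⟨h1, h2⟩ := key y c hy
    have hj1 : 2 ^ j ∣ c := Nat.ordProj_dvd c 2
    have hj2 : ¬ 2 ^ (j + 1) ∣ c := Nat.pow_succ_factorization_not_dvd hc0 Nat.prime_two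
    rcases lt_trichotomy y j with h | h | h
    · exact absurd (dvd_trans (pow_dvd_pow 2 h) hj1) h2
    · exact h
    · exact absurd (dvd_trans (pow_dvd_pow 2 h) h1) hj2
end

section
/- For every natural number c ≥ 1 and every exponent e ≥ 2, (2^c + 1)^e does not divide 2^(2^n) - 1 for any n with 2^c + 1 dividing 2^(2^n) - 1. More precisely: if F_j divides 2^c+1 (where c = 2^j·w, w odd) and (2^c+1)^e divides 2^(2^n) - 1 with e ≥ 2, then F_j divides ∏_{i<n, i≠j} F_i, contradicting pairwise coprimality of the Fermat numbers; hence no such e ≥ 2 exists. -/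
theorem no_high_power_divisor (n c j w e : ℕ) (hc : 1 ≤ c) (hcw : c = 2 ^ j * w)
    (hw : Odd w) (hjn : j < n) (he : 2 ≤ e) :
    ¬ (2 ^ c + 1) ^ e ∣ 2 ^ (2 ^ n) - 1 := by
  intro h
  set F := Nat.fermatNumber j with hF
  set M := ∏ k ∈ (Finset.range n).erase j, Nat.fermatNumber k with hM
  -- F divides 2^c + 1
  have h1 : F ∣ 2 ^ c + 1 := by
    have := Odd.nat_add_dvd_pow_add_pow (2 ^ (2 ^ j)) 1 hw
    simpa [hF, Nat.fermatNumber, hcw, pow_mul, one_pow] using this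
  -- 2^(2^n) - 1 = F * M
  have h2 : 2 ^ (2 ^ n) - 1 = F * M := by
    have := Nat.prod_fermatNumber n
    rw [← Finset.mul_prod_erase _ _ (Finset.mem_range.mpr hjn)] at this
    rw [hF, hM, this]
    simp [Nat.fermatNumber]
  -- F is coprime to M
  have h3 : Nat.Coprime F M := by
    apply Nat.Coprime.prod_right
    intro i hi
    exact Nat.coprime_fermatNumber_fermatNumber (Finset.ne_of_mem_erase hi).symm
  -- F^2 divides F * M
  have h4 : F ^ 2 ∣ F * M := by
    rw [← h2]
    calc F ^ 2 ∣ (2 ^ c + 1) ^ 2 := pow_dvd_pow_of_dvd h1 2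
    _ ∣ (2 ^ c + 1) ^ e := pow_dvd_pow _ he
    _ ∣ 2 ^ (2 ^ n) - 1 := h
  have hFpos : 0 < F := by have := Nat.three_le_fermatNumber j; omega
  have h5 : F ∣ M := by
    rw [pow_two] at h4
    exact (Nat.mul_dvd_mul_iff_left hFpos).mp h4
  have : F = 1 := h3.eq_one_of_dvd h5
  have := Nat.three_le_fermatNumber j
  omega
end

section
/- For natural numbers n ≥ 3, there is no representation 2^(2^n) - 1 = 2 · (2^c+1)^(d₂) + (2^c+1)^(d₂') with c ≥ 3. -/
/-!
Reduce modulo 8: for `c ≥ 3` every power of `2 ^ c + 1` is `≡ 1`, so the right side is `≡ 3`,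
while `2 ^ (2 ^ n) - 1 ≡ 7` as soon as `2 ^ n ≥ 3`.
-/

lemma two_pow_sub_one_mod_eight {m : ℕ} (hm : 3 ≤ m) : (2 ^ m - 1) % 8 = 7 := by
  obtain ⟨k, rfl⟩ := Nat.exists_eq_add_of_le hm
  have hpos : 0 < 2 ^ k := Nat.two_pow_pos k
  rw [pow_add]
  omega

lemma pow_two_pow_add_one_mod_eight {c : ℕ} (hc : 3 ≤ c) (d : ℕ) : (2 ^ c + 1) ^ d % 8 = 1 := by
  obtain ⟨k, rfl⟩ := Nat.exists_eq_add_of_le hc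
  have hbase : (2 ^ (3 + k) + 1) % 8 = 1 := by
    rw [pow_add]
    omega
  rw [Nat.pow_mod, hbase, one_pow, Nat.one_mod]

theorem no_repr_case_two (n c d₂ d₂' : ℕ) (hn : 3 ≤ n) (hc : 3 ≤ c) :
    2 ^ (2 ^ n) - 1 ≠ 2 * (2 ^ c + 1) ^ d₂ + (2 ^ c + 1) ^ d₂' := by
  have hexp : 3 ≤ 2 ^ n := le_trans (by norm_num) (Nat.pow_le_pow_right two_pos hn)
  have hlhs := two_pow_sub_one_mod_eight hexp
  have h₂ := pow_two_pow_add_one_mod_eight hc d₂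
  have h₂' := pow_two_pow_add_one_mod_eight hc d₂'
  omega
end

section
/- Let A ⊂ ℤ \ {0, ±1}, B ⊂ ℤ with all elements ≥ 2, and C ⊂ ℤ with all elements ≥ 1 be finite sets. Then there are infinitely many n such that 2^(2^n) cannot be written as c·b^e + a with a ∈ A, b ∈ B, c ∈ C, and e a positive integer. -/
/-!
Fix `a`, `b`, `c`. If `b` is even, then once `2 ^ n ≥ |a|` comparing powers of `2` in
`2 ^ 2 ^ n - a = c * b ^ e` forces `e < |a|`, so only finitely many `n` are representable.
If `b` is odd, pick an odd prime `p ∣ b`. Two representations `n < m`, with exponents `e ≤ f`,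
give `p ^ e ∣ 2 ^ (2 ^ m - 2 ^ n) - 1`, and lifting the exponent bounds `e` by `m` plus a
constant depending on `p`; on the other hand `c * b ^ e ≈ 2 ^ 2 ^ n` makes `e` exponential in
`n`. Hence `m > 2 * n` once `n` is large. Finitely many sets with this lacunarity property
cover at most one point each of `(M, 2 * M]`, so for large `M` they miss some point there.
-/

open Filter

def EventuallyLacunary (S : Set ℕ) : Prop :=
  ∀ᶠ n in atTop, n ∈ S → ∀ m ∈ S, n < m → 2 * n < m

-- `e = 0` is allowed: this only enlarges the set.
def reprIndices (a b c : ℤ) : Set ℕ :=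
  {n | ∃ e : ℕ, (2 : ℤ) ^ 2 ^ n = c * b ^ e + a}

lemma Set.Finite.eventuallyLacunary {S : Set ℕ} (hS : S.Finite) : EventuallyLacunary S := by
  filter_upwards [Nat.cofinite_eq_atTop ▸ hS.eventually_cofinite_notMem] with n hn hnS
  exact absurd hnS hn

lemma EventuallyLacunary.infinite_compl_biUnion {ι : Type*} {s : Finset ι} {S : ι → Set ℕ}
    (h : ∀ i ∈ s, EventuallyLacunary (S i)) : (⋃ i ∈ s, S i)ᶜ.Infinite := by
  classical
  obtain ⟨N, hN⟩ := ((eventually_all_finset s).2 h).exists_forall_of_atTop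
  refine Set.infinite_of_forall_exists_gt fun L => ?_
  set M := N + L + s.card + 1
  set I := Finset.Ioc M (2 * M)
  -- two points of `(M, 2 * M]` are never more than a factor `2` apart
  have hmeet : ∀ i ∈ s, (I.filter (· ∈ S i)).card ≤ 1 := by
    refine fun i hi => Finset.card_le_one.2 fun n hn m hm => ?_
    simp only [I, Finset.mem_filter, Finset.mem_Ioc] at hn hm
    by_contra hne
    rcases Nat.lt_or_gt_of_ne hne with hlt | hlt
    · have := hN n (by omega) i hi hn.2 m hm.2 hlt; omega
    · have := hN m (by omega) i hi hm.2 n hn.2 hlt; omega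
  have hcard : (s.biUnion fun i => I.filter (· ∈ S i)).card < I.card := calc
    _ ≤ ∑ i ∈ s, (I.filter (· ∈ S i)).card := Finset.card_biUnion_le
    _ ≤ ∑ _i ∈ s, 1 := Finset.sum_le_sum hmeet
    _ < I.card := by simp only [Finset.sum_const, smul_eq_mul, mul_one, I, Nat.card_Ioc]; omega
  obtain ⟨n, hnI, hn⟩ := Finset.exists_mem_notMem_of_card_lt_card hcard
  refine ⟨n, fun hnS => hn ?_, by simp only [I, Finset.mem_Ioc] at hnI; omega⟩
  obtain ⟨i, hi, hni⟩ := Set.mem_iUnion₂.1 hnS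
  exact Finset.mem_biUnion.2 ⟨i, hi, Finset.mem_filter.2 ⟨hnI, hni⟩⟩

lemma eventually_mul_add_lt_two_pow (U V : ℕ) : ∀ᶠ n in atTop, U * n + V < 2 ^ n := by
  have h := (isLittleO_coe_const_pow_of_one_lt (R := ℝ) one_lt_two).bound
    (show (0 : ℝ) < 1 / (U + V + 1) by positivity)
  filter_upwards [h, eventually_ge_atTop 1] with n hn hn1
  rw [Real.norm_natCast, norm_pow, Real.norm_two, div_mul_eq_mul_div, one_mul,
    le_div_iff₀ (by positivity)] at hn
  have : (U + V + 1) * n ≤ 2 ^ n := by exact_mod_cast (mul_comm _ _).trans_le hn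
  nlinarith

lemma le_padicValNat_add_of_pow_dvd_two_pow_sub_one {p : ℕ} [hp : Fact p.Prime] (hp_odd : Odd p)
    {e D : ℕ} (hD : D ≠ 0) (h : p ^ e ∣ 2 ^ D - 1) :
    e ≤ padicValNat p (2 ^ (p - 1) - 1) + padicValNat p D := by
  have hcop : Nat.Coprime 2 p := Nat.coprime_two_left.2 hp_odd
  have hfermat : p ∣ 2 ^ (p - 1) - 1 :=
    (Nat.modEq_iff_dvd' Nat.one_le_two_pow).1
      (Nat.ModEq.pow_card_sub_one_eq_one hp.out hcop).symm
  -- lifting the exponent applies to `(2 ^ (p - 1)) ^ D - 1`, a multiple of `2 ^ D - 1`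
  have hdvd : 2 ^ D - 1 ∣ (2 ^ (p - 1)) ^ D - 1 ^ D := by
    simpa [← pow_mul, mul_comm] using Nat.sub_dvd_pow_sub_pow (2 ^ D) 1 (p - 1)
  have hgt : 1 < 2 ^ (p - 1) := Nat.one_lt_two_pow (Nat.sub_ne_zero_of_lt hp.out.one_lt)
  rw [← padicValNat.pow_sub_pow hp_odd hgt hfermat
    ((Nat.Prime.coprime_iff_not_dvd hp.out).1 hcop.symm ∘ hp.out.dvd_of_dvd_pow) hD,
    ← padicValNat_dvd_iff_le (Nat.sub_ne_zero_of_lt (by simpa using Nat.one_lt_pow hD hgt))]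
  exact h.trans hdvd

lemma lt_add_of_pow_dvd_two_pow_two_pow_sub {p : ℕ} [hp : Fact p.Prime] (hp_odd : Odd p)
    {e n m : ℕ} (hnm : n < m) (h : (p : ℤ) ^ e ∣ 2 ^ 2 ^ m - 2 ^ 2 ^ n) :
    e < padicValNat p (2 ^ (p - 1) - 1) + m := by
  have hlt : 2 ^ n < 2 ^ m := Nat.pow_lt_pow_right one_lt_two hnm
  have hD : 2 ^ m - 2 ^ n ≠ 0 := Nat.sub_ne_zero_of_lt hlt
  have hfac :
      (2 : ℤ) ^ 2 ^ m - 2 ^ 2 ^ n = 2 ^ 2 ^ n * ((2 ^ (2 ^ m - 2 ^ n) - 1 : ℕ) : ℤ) := by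
    push_cast [Nat.one_le_two_pow]
    rw [mul_sub, ← pow_add, Nat.add_sub_cancel' hlt.le, mul_one]
  have hcop : IsCoprime ((p : ℤ) ^ e) (2 ^ 2 ^ n) :=
    (Nat.isCoprime_iff_coprime.2 (Nat.coprime_two_right.2 hp_odd)).pow
  have he := le_padicValNat_add_of_pow_dvd_two_pow_sub_one hp_odd hD
    (Int.natCast_dvd_natCast.1 (by exact_mod_cast hcop.dvd_of_dvd_mul_left (hfac ▸ h)))
  have hv : padicValNat p (2 ^ m - 2 ^ n) < m :=
    (padicValNat_le_nat_log _).trans_lt <| Nat.log_lt_of_lt_pow hD <|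
      (Nat.sub_lt (by positivity) (by positivity)).trans_le (Nat.pow_le_pow_left hp.out.two_le m)
  omega

lemma two_pow_lt_of_two_pow_two_pow_eq {a b c : ℤ} (hb : b ≠ 0) {n e : ℕ}
    (h : (2 : ℤ) ^ 2 ^ n = c * b ^ e + a) : 2 ^ n < c.natAbs + a.natAbs + b.natAbs * e := by
  have hbe : 1 ≤ b.natAbs ^ e := Nat.one_le_pow _ _ (Int.natAbs_pos.2 hb)
  have hle : 2 ^ 2 ^ n ≤ (c.natAbs + a.natAbs) * b.natAbs ^ e := calc
    2 ^ 2 ^ n = (c * b ^ e + a).natAbs := by rw [← h]; simp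
    _ ≤ c.natAbs * b.natAbs ^ e + a.natAbs := by
      simpa [Int.natAbs_mul, Int.natAbs_pow] using Int.natAbs_add_le (c * b ^ e) a
    _ ≤ (c.natAbs + a.natAbs) * b.natAbs ^ e := by
      rw [add_mul]
      exact Nat.add_le_add_left (Nat.le_mul_of_pos_right _ hbe) _
  have hlt : (c.natAbs + a.natAbs) * b.natAbs ^ e < 2 ^ (c.natAbs + a.natAbs + b.natAbs * e) := by
    rw [pow_add, pow_mul]
    exact Nat.mul_lt_mul_of_lt_of_le Nat.lt_two_pow_self
      (Nat.pow_le_pow_left Nat.lt_two_pow_self.le e) (by positivity)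
  exact (Nat.pow_lt_pow_iff_right (by norm_num)).1 (hle.trans_lt hlt)

lemma reprIndices_finite_of_even {a b : ℤ} (c : ℤ) (ha : a ≠ 0) (hb : Even b) :
    (reprIndices a b c).Finite := by
  have hsmall : ∀ n e, a.natAbs ≤ 2 ^ n → (2 : ℤ) ^ 2 ^ n = c * b ^ e + a → e < a.natAbs := by
    intro n e hn h
    by_contra! hae
    have h2a : (2 : ℤ) ^ a.natAbs ∣ a := by
      have h1 : (2 : ℤ) ^ a.natAbs ∣ 2 ^ 2 ^ n := pow_dvd_pow 2 hn
      have h2 : (2 : ℤ) ^ a.natAbs ∣ c * b ^ e :=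
        ((pow_dvd_pow 2 hae).trans (pow_dvd_pow_of_dvd hb.two_dvd e)).mul_left c
      simpa [h] using dvd_sub h1 h2
    have := Int.natAbs_le_of_dvd_ne_zero h2a ha
    rw [Int.natAbs_pow] at this
    exact (Nat.lt_two_pow_self.trans_le this).false
  have hinj : Function.Injective fun n : ℕ => (2 : ℤ) ^ 2 ^ n :=
    (pow_right_injective₀ two_pos (by norm_num)).comp (Nat.pow_right_injective le_rfl)
  refine ((Set.finite_Iio a.natAbs).union
    (((Finset.range a.natAbs).image fun e => c * b ^ e + a).finite_toSet.preimage
      hinj.injOn)).subset ?_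
  rintro n ⟨e, he⟩
  by_cases hn : 2 ^ n < a.natAbs
  · exact Or.inl (Nat.lt_two_pow_self.trans hn)
  · exact Or.inr (by simpa using ⟨e, hsmall n e (not_lt.1 hn) he, he.symm⟩)

lemma eventuallyLacunary_reprIndices_of_odd (a : ℤ) {b c : ℤ} (hb : 2 ≤ b) (hb_odd : Odd b)
    (hc : 0 < c) : EventuallyLacunary (reprIndices a b c) := by
  obtain ⟨p, hp, hpb⟩ := Nat.exists_prime_and_dvd (show b.natAbs ≠ 1 by omega)
  have : Fact p.Prime := ⟨hp⟩
  have hp_odd : Odd p := (Int.natAbs_odd.2 hb_odd).of_dvd_nat hpb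
  set C := padicValNat p (2 ^ (p - 1) - 1)
  filter_upwards [eventually_mul_add_lt_two_pow (2 * b.natAbs)
    (c.natAbs + a.natAbs + b.natAbs * C)] with n hlin
  rintro ⟨e, he⟩ m ⟨f, hf⟩ hnm
  by_contra! hmn
  have hef : e ≤ f := by
    have : c * b ^ e < c * b ^ f := by
      have := pow_lt_pow_right₀ (one_lt_two (α := ℤ)) (Nat.pow_lt_pow_right one_lt_two hnm)
      linarith
    exact ((pow_lt_pow_iff_right₀ (by omega)).1 (lt_of_mul_lt_mul_left this hc.le)).le
  have hdvd : (p : ℤ) ^ e ∣ 2 ^ 2 ^ m - 2 ^ 2 ^ n := by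
    obtain ⟨g, rfl⟩ := Nat.exists_eq_add_of_le hef
    refine (pow_dvd_pow_of_dvd (Int.natCast_dvd.2 hpb) e).trans ⟨c * (b ^ g - 1), ?_⟩
    rw [hf, he]
    ring
  have hem := lt_add_of_pow_dvd_two_pow_two_pow_sub hp_odd hnm hdvd
  have hne := two_pow_lt_of_two_pow_two_pow_eq (by omega) he
  have := Nat.mul_le_mul_left b.natAbs (show e ≤ C + 2 * n by omega)
  nlinarith

theorem infinitely_many_not_representable (A B C : Finset ℤ)
    (hA : ∀ a ∈ A, 2 ≤ |a|) (hB : ∀ b ∈ B, 2 ≤ b) (hC : ∀ c ∈ C, 1 ≤ c) :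
    {n : ℕ | ∀ a ∈ A, ∀ b ∈ B, ∀ c ∈ C, ∀ e : ℕ, 1 ≤ e →
      (2 : ℤ) ^ (2 ^ n) ≠ c * b ^ e + a}.Infinite := by
  have hlac : ∀ t ∈ A ×ˢ B ×ˢ C, EventuallyLacunary (reprIndices t.1 t.2.1 t.2.2) := by
    rintro ⟨a, b, c⟩ ht
    simp only [Finset.mem_product] at ht
    obtain ⟨ha, hb, hc⟩ := ht
    rcases Int.even_or_odd b with hb_even | hb_odd
    · have ha0 : a ≠ 0 := by rintro rfl; simpa using hA 0 ha
      exact (reprIndices_finite_of_even c ha0 hb_even).eventuallyLacunary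
    · exact eventuallyLacunary_reprIndices_of_odd a (hB b hb) hb_odd (hC c hc)
  refine (EventuallyLacunary.infinite_compl_biUnion hlac).mono ?_
  intro n hn a ha b hb c hc e _ heq
  exact hn (Set.mem_biUnion (x := (a, b, c))
    (Finset.mem_product.2 ⟨ha, Finset.mem_product.2 ⟨hb, hc⟩⟩) ⟨e, heq⟩)
end

section
/- Define τ(z) (resp. τ₊(z)) as the length of the shortest division-free straight-line program over {+, −, ×} (resp. {+, ×}) starting from the constant 1 that computes the integer z. Then for every z with 2^n ≤ z < 2^(n+1), τ₊(z) ≤ 2^k - 1 + 2·⌈(n+1)/k⌉ for any k ≥ 1; in particular, choosing k = ⌈log n − log log n⌉ gives τ₊(z) = O(n/log n). -/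
/-- `Computes allowSub l z` : there is a straight-line program of length `l`,
starting from the constant `1`, where each later register is the sum, product,
or (if `allowSub = true`) difference of two earlier registers, whose final
register equals `z`. With `allowSub = false` this is an
addition–multiplication chain (AMC). -/
def Computes (allowSub : Bool) (l : ℕ) (z : ℤ) : Prop :=
  ∃ a : ℕ → ℤ, a 0 = 1 ∧
    (∀ i, 1 ≤ i → i ≤ l → ∃ j k, j < i ∧ k < i ∧
      (a i = a j + a k ∨ a i = a j * a k ∨ (allowSub = true ∧ a i = a j - a k))) ∧
    a l = z

/-- `τ₊ z` : minimal length of an addition–multiplication chain computing `z`. -/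
noncomputable def tauPlus (z : ℤ) : ℕ := sInf {l : ℕ | Computes false l z}

/-!
Write `z` in base `B = 2 ^ k`: it has `m = ⌊n / k⌋ + 1` digits. A chain first lists `1, 2, …, B`
in `B - 1` additions, so that every nonzero digit is a register, and then runs Horner's scheme,
spending one multiplication by `B` and one addition of a digit per remaining digit. Taking
`2 ^ k ≈ √n` makes both the table and the `2 ⌊n / k⌋` Horner steps `O(n / log n)`.
-/

def IsSLPStep (allowSub : Bool) (x y w : ℤ) : Prop :=
  x = y + w ∨ x = y * w ∨ (allowSub = true ∧ x = y - w)

def IsSLP (allowSub : Bool) (a : ℕ → ℤ) (l : ℕ) : Prop :=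
  a 0 = 1 ∧ ∀ i, 1 ≤ i → i ≤ l → ∃ j k, j < i ∧ k < i ∧ IsSLPStep allowSub (a i) (a j) (a k)

def Generates (allowSub : Bool) (l : ℕ) (S : Set ℤ) : Prop :=
  ∃ a, IsSLP allowSub a l ∧ S ⊆ a '' Set.Iic l

variable {b : Bool} {a : ℕ → ℤ} {l : ℕ} {S T : Set ℤ}

theorem IsSLP.update (h : IsSLP b a l) {j k : ℕ} (hj : j ≤ l) (hk : k ≤ l) {x : ℤ}
    (hx : IsSLPStep b x (a j) (a k)) : IsSLP b (Function.update a (l + 1) x) (l + 1) := by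
  have hold : ∀ i ≤ l, Function.update a (l + 1) x i = a i := fun i hi =>
    Function.update_of_ne (by omega) _ _
  refine ⟨(hold 0 (Nat.zero_le l)).trans h.1, fun i hi1 hi2 => ?_⟩
  rcases Nat.lt_or_ge i (l + 1) with hil | hil
  · obtain ⟨j', k', hj', hk', hstep⟩ := h.2 i hi1 (by omega)
    exact ⟨j', k', hj', hk', by rwa [hold i (by omega), hold j' (by omega), hold k' (by omega)]⟩
  · obtain rfl : i = l + 1 := by omega
    exact ⟨j, k, by omega, by omega, by
      rwa [Function.update_self, hold j hj, hold k hk]⟩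

theorem Generates.step (h : Generates b l S) {x y z : ℤ} (hx : x ∈ S) (hy : y ∈ S)
    (hz : IsSLPStep b z x y) : Generates b (l + 1) (insert z S) := by
  obtain ⟨a, ha, hS⟩ := h
  obtain ⟨j, hj, rfl⟩ := hS hx
  obtain ⟨k, hk, rfl⟩ := hS hy
  refine ⟨_, ha.update hj hk hz,
    Set.insert_subset ⟨l + 1, Set.mem_Iic.2 le_rfl, Function.update_self ..⟩ fun _ hw => ?_⟩
  obtain ⟨i, hi, rfl⟩ := hS hw
  exact ⟨i, Set.mem_Iic.2 (le_trans hi (Nat.le_succ l)),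
    Function.update_of_ne (by simp only [Set.mem_Iic] at hi; omega) _ _⟩

theorem Generates.subset (h : Generates b l S) (hTS : T ⊆ S) : Generates b l T := by
  obtain ⟨a, ha, hS⟩ := h
  exact ⟨a, ha, hTS.trans hS⟩

theorem Generates.insert_one (h : Generates b l S) : Generates b l (insert 1 S) := by
  obtain ⟨a, ha, hS⟩ := h
  exact ⟨a, ha, Set.insert_subset ⟨0, Set.mem_Iic.2 (Nat.zero_le l), ha.1⟩ hS⟩

theorem Generates.succ (h : Generates b l S) : Generates b (l + 1) S :=
  -- pad the program with the useless step `1 * 1`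
  (h.insert_one.step (Set.mem_insert 1 S) (Set.mem_insert 1 S) (Or.inr (Or.inl rfl))).subset
    fun _ hx => Or.inr (Or.inr hx)

theorem Generates.mono {l' : ℕ} (h : Generates b l S) (hl : l ≤ l') (hTS : T ⊆ S) :
    Generates b l' T := by
  induction l', hl using Nat.le_induction with
  | base => exact h.subset hTS
  | succ l' _ ih => exact ih.succ

theorem Generates.computes {l' : ℕ} (h : Generates b l S) {z : ℤ} (hz : z ∈ S) (hl : l < l') :
    Computes b l' z := by
  obtain ⟨l', rfl⟩ := Nat.exists_eq_add_of_lt hl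
  obtain ⟨a, ha, hS⟩ := h.mono (Nat.le_add_right l l') le_rfl
  obtain ⟨j, hj, rfl⟩ := hS hz
  obtain ⟨h0, hsteps⟩ :=
    ha.update (Set.mem_Iic.1 hj) (Nat.zero_le _) (Or.inr (Or.inl (by rw [ha.1, mul_one])))
  exact ⟨_, h0, hsteps, Function.update_self ..⟩

theorem generates_Icc (N : ℕ) : Generates b N (Set.Icc 1 (N + 1)) := by
  induction N with
  | zero =>
    refine ⟨fun _ => 1, ⟨rfl, fun i _ _ => by omega⟩,
      fun x hx => ⟨0, Set.mem_Iic.2 le_rfl, ?_⟩⟩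
    simp only [Set.mem_Icc, Nat.cast_zero, zero_add] at hx
    exact (le_antisymm hx.2 hx.1).symm
  | succ N ih =>
    refine (ih.step (y := 1) (Set.right_mem_Icc.2 (by omega)) (Set.left_mem_Icc.2 (by omega))
      (Or.inl rfl)).subset fun x hx => ?_
    simp only [Set.mem_Icc, Set.mem_insert_iff, Nat.cast_succ] at hx ⊢
    omega

theorem Generates.horner_step {B v d : ℤ} (h : Generates b l (insert v (Set.Icc 1 B)))
    (hB : 1 ≤ B) (hd : 0 ≤ d) (hdB : d ≤ B) :
    Generates b (l + 2) (insert (v * B + d) (Set.Icc 1 B)) := by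
  have hBmem : B ∈ insert v (Set.Icc 1 B) := Or.inr (Set.right_mem_Icc.2 hB)
  have hvB := h.step (Set.mem_insert v _) hBmem (Or.inr (Or.inl rfl))
  rcases hd.eq_or_lt with rfl | hd
  · -- the digit `0` costs a multiplication by `1`
    have := hvB.step (Set.mem_insert _ _) (Or.inr (Or.inr ⟨le_rfl, hB⟩)) (Or.inr (Or.inl rfl))
    exact this.subset (Set.insert_subset (by simp) fun x hx => Or.inr (Or.inr (Or.inr hx)))
  · have := hvB.step (x := v * B) (y := d) (Set.mem_insert _ _) (Or.inr (Or.inr ⟨hd, hdB⟩))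
      (Or.inl rfl)
    exact this.subset (Set.insert_subset_insert fun x hx => Or.inr (Or.inr hx))

theorem generates_of_lt_pow (B : ℕ) (hB : 1 ≤ B) (m : ℕ) :
    ∀ z : ℕ, 1 ≤ z → z < B ^ (m + 1) →
      Generates b (B - 1 + 2 * m) (insert (z : ℤ) (Set.Icc 1 B)) := by
  have hIcc : Generates b (B - 1) (Set.Icc 1 (B : ℤ)) := by
    have := generates_Icc (b := b) (B - 1)
    rwa [Nat.cast_sub hB, Nat.cast_one, sub_add_cancel] at this
  have of_lt_base : ∀ z : ℕ, 1 ≤ z → z < B →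
      Generates b (B - 1) (insert (z : ℤ) (Set.Icc 1 B)) := fun z hz1 hzB => by
    rw [Set.insert_eq_of_mem (Set.mem_Icc.2 ⟨by exact_mod_cast hz1, by exact_mod_cast hzB.le⟩)]
    exact hIcc
  induction m with
  | zero => simpa using of_lt_base
  | succ m ih =>
    intro z hz1 hzB
    rcases Nat.eq_zero_or_pos (z / B) with hq | hq
    · have hzB : z < B := by rwa [Nat.div_eq_zero_iff_lt (by omega)] at hq
      exact (of_lt_base z hz1 hzB).mono (by omega) le_rfl
    have hqB : z / B < B ^ (m + 1) := by
      rw [Nat.div_lt_iff_lt_mul (by omega), ← pow_succ]; exact hzB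
    have hz : (z : ℤ) = (z / B : ℕ) * B + (z % B : ℕ) := by
      exact_mod_cast (Nat.div_add_mod' z B).symm
    rw [hz, show B - 1 + 2 * (m + 1) = B - 1 + 2 * m + 2 by ring]
    exact (ih _ hq hqB).horner_step (by exact_mod_cast hB) (by positivity)
      (by exact_mod_cast (Nat.mod_lt z (by omega)).le)

theorem tauPlus_le_of_lt_pow {B m z : ℕ} (hB : 1 ≤ B) (hz : 1 ≤ z) (hzB : z < B ^ (m + 1)) :
    tauPlus z ≤ B + 2 * m :=
  Nat.sInf_le ((generates_of_lt_pow B hB m z hz hzB).computes (Set.mem_insert _ _) (by omega))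

theorem tauPlus_le_two_pow_add {n k : ℕ} {z : ℤ} (hk : 1 ≤ k) (hz : 0 < z)
    (hzn : z < 2 ^ (n + 1)) : tauPlus z ≤ 2 ^ k + 2 * (n / k) := by
  lift z to ℕ using hz.le
  refine tauPlus_le_of_lt_pow Nat.one_le_two_pow (by omega) ?_
  calc z < 2 ^ (n + 1) := by exact_mod_cast hzn
    _ ≤ 2 ^ (k * (n / k + 1)) := Nat.pow_le_pow_right two_pos (Nat.lt_mul_div_succ n hk)
    _ = (2 ^ k) ^ (n / k + 1) := pow_mul 2 k _

theorem tauPlus_mul_log_le {n : ℕ} {z : ℤ} (hn : n ≠ 0) (hz : 2 ^ n ≤ z)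
    (hzn : z < 2 ^ (n + 1)) : tauPlus z * Nat.log 2 n ≤ 8 * n := by
  set L := Nat.log 2 n
  set k := L / 2 + 1
  have hLk : L ≤ 2 * k := by omega
  have hk_pow : 2 * k ≤ 2 ^ k := by
    have := Nat.lt_two_pow_self (n := k - 1)
    rw [show k = k - 1 + 1 by omega, pow_succ]
    omega
  have h_table : 2 ^ k * 2 ^ k ≤ 4 * n :=
    calc 2 ^ k * 2 ^ k = 2 ^ (2 * k) := by ring
      _ ≤ 2 ^ (L + 2) := Nat.pow_le_pow_right two_pos (by omega)
      _ = 4 * 2 ^ L := by ring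
      _ ≤ 4 * n := Nat.mul_le_mul_left 4 (Nat.pow_log_le_self 2 hn)
  have h_horner : n / k * (2 * k) ≤ 2 * n := by
    have := Nat.div_mul_le_self n k
    nlinarith
  have hz0 : 0 < z := (pow_pos two_pos n).trans_le hz
  calc tauPlus z * L ≤ (2 ^ k + 2 * (n / k)) * L :=
        Nat.mul_le_mul_right _ (tauPlus_le_two_pow_add (by omega) hz0 hzn)
    _ = 2 ^ k * L + 2 * (n / k * L) := by ring
    _ ≤ 2 ^ k * 2 ^ k + 2 * (n / k * (2 * k)) := by gcongr; omega
    _ ≤ 8 * n := by omega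

theorem tauPlus_upper_bound :
    (∀ (n k : ℕ) (z : ℤ), 1 ≤ k → 2 ^ n ≤ z → z < 2 ^ (n + 1) →
      tauPlus z ≤ 2 ^ k - 1 + 2 * ((n + k) / k)) ∧
    ∃ C : ℕ, ∀ (n : ℕ) (z : ℤ), 2 ≤ n → 2 ^ n ≤ z → z < 2 ^ (n + 1) →
      tauPlus z * Nat.log 2 n ≤ C * n := by
  refine ⟨fun n k z hk hz hzn => ?_, 8, fun n z hn hz hzn => tauPlus_mul_log_le (by omega) hz hzn⟩
  have := tauPlus_le_two_pow_add hk ((pow_pos two_pos n).trans_le hz) hzn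
  rw [Nat.add_div_right n hk]
  have := Nat.one_le_two_pow (n := k)
  omega
end

section
/- The maximum integer computable by an addition–multiplication chain (starting from 1) using exactly a additions and m multiplications is 2^(a · 2^m), achieved by doubling a times and then squaring m times. -/
/-- `AMCComputes a m z` : there is an addition–multiplication chain starting
from `1`, using exactly `a` additions and `m` multiplications (`op i = true`
means step `i` is an addition), which computes `z`. -/
def AMCComputes (a m : ℕ) (z : ℕ) : Prop :=
  ∃ v : ℕ → ℕ, ∃ op : ℕ → Bool,
    v 0 = 1 ∧
    (∀ i < a + m, ∃ j k, j ≤ i ∧ k ≤ i ∧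
      v (i + 1) = if op i then v j + v k else v j * v k) ∧
    ((Finset.range (a + m)).filter (fun i => op i = true)).card = a ∧
    z = v (a + m)


/-!
Along a chain, every value computed after `A` additions and `M` multiplications is at most
`2 ^ (A * 2 ^ M)`: an addition at most doubles the largest value so far, which raises the
exponent by `1 ≤ 2 ^ M`, and a multiplication at most squares it, which doubles the exponent.
Doubling `a` times and then squaring `m` times meets the bound at every step.
-/

open Nat

theorem Nat.count_add_count_not (p : ℕ → Prop) [DecidablePred p] (n : ℕ) :
    count p n + count (fun k => ¬p k) n = n := by
  simp only [count_eq_card_filter_range, Finset.card_filter_add_card_filter_not,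
    Finset.card_range]

lemma two_pow_mul_two_pow_le {a a' m m' : ℕ} (ha : a ≤ a') (hm : m ≤ m') :
    2 ^ (a * 2 ^ m) ≤ 2 ^ (a' * 2 ^ m') :=
  Nat.pow_le_pow_right two_pos (Nat.mul_le_mul ha (Nat.pow_le_pow_right two_pos hm))

lemma two_pow_mul_two_pow_add_self_le (a m : ℕ) :
    2 ^ (a * 2 ^ m) + 2 ^ (a * 2 ^ m) ≤ 2 ^ ((a + 1) * 2 ^ m) := by
  rw [← two_mul, ← pow_succ', add_one_mul]
  exact Nat.pow_le_pow_right two_pos (Nat.add_le_add_left Nat.one_le_two_pow _)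

lemma two_pow_mul_two_pow_mul_self (a m : ℕ) :
    2 ^ (a * 2 ^ m) * 2 ^ (a * 2 ^ m) = 2 ^ (a * 2 ^ (m + 1)) := by
  rw [← pow_add, pow_succ, mul_two, mul_add]

theorem le_two_pow_count_mul_two_pow_count {v : ℕ → ℕ} {op : ℕ → Bool} {n : ℕ} (h0 : v 0 = 1)
    (hstep : ∀ i < n, ∃ j k, j ≤ i ∧ k ≤ i ∧
      v (i + 1) = if op i then v j + v k else v j * v k) :
    ∀ i ≤ n, ∀ l ≤ i, v l ≤ 2 ^ (count (op · = true) i * 2 ^ count (op · = false) i) := by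
  intro i
  induction i with
  | zero => intro _ l hl; simp [Nat.le_zero.mp hl, h0]
  | succ i ih =>
    intro hi l hl
    have hprev := ih (by omega)
    rcases hl.lt_or_eq with hl | rfl
    · exact (hprev l (by omega)).trans
        (two_pow_mul_two_pow_le (count_monotone _ i.le_succ) (count_monotone _ i.le_succ))
    obtain ⟨j, k, hj, hk, hv⟩ := hstep i hi
    have hj := hprev j hj
    have hk := hprev k hk
    rw [hv]
    cases hop : op i
    · simp only [count_succ, hop, if_true, Bool.false_eq_true, if_false, add_zero]
      exact (Nat.mul_le_mul hj hk).trans (two_pow_mul_two_pow_mul_self _ _).le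
    · simp only [count_succ, hop, if_true]
      exact (Nat.add_le_add hj hk).trans (two_pow_mul_two_pow_add_self_le _ _)

theorem AMCComputes.le_two_pow {a m z : ℕ} (h : AMCComputes a m z) : z ≤ 2 ^ (a * 2 ^ m) := by
  obtain ⟨v, op, h0, hstep, hadd, rfl⟩ := h
  have hA : count (op · = true) (a + m) = a := by rw [count_eq_card_filter_range, hadd]
  have hM : count (op · = false) (a + m) = m := by
    have := count_add_count_not (op · = true) (a + m)
    simp only [Bool.not_eq_true] at this
    omega
  simpa [hA, hM] using
    le_two_pow_count_mul_two_pow_count h0 hstep (a + m) le_rfl (a + m) le_rfl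

theorem AMCComputes.two_pow (a m : ℕ) : AMCComputes a m (2 ^ (a * 2 ^ m)) := by
  refine ⟨fun i => 2 ^ (min i a * 2 ^ (i - a)), fun i => decide (i < a), by simp,
    fun i _ => ⟨i, i, le_rfl, le_rfl, ?_⟩, ?_, by simp⟩
  · rcases lt_or_ge i a with hi | hi
    · simp [hi, min_eq_left hi.le, Nat.sub_eq_zero_of_le hi.le, pow_succ, mul_two]
    · simp [hi, hi.trans i.le_succ, Nat.succ_sub hi, two_pow_mul_two_pow_mul_self]
  · have : (Finset.range (a + m)).filter (fun i => decide (i < a) = true) = Finset.range a := by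
      ext i
      simp only [Finset.mem_filter, Finset.mem_range, decide_eq_true_eq]
      omega
    rw [this, Finset.card_range]

theorem amc_max_value (a m : ℕ) :
    (∀ z, AMCComputes a m z → z ≤ 2 ^ (a * 2 ^ m)) ∧
    AMCComputes a m (2 ^ (a * 2 ^ m)) :=
  ⟨fun _ h => h.le_two_pow, AMCComputes.two_pow a m⟩
end
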